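/- arXiv:2409.02249 — 4 statements merged into one kernel-verified Lean document; each statement's English description precedes it below -/
import Mathlib

section
/- In intuitionistic linear logic extended with the promotion axiom A ⊢ !A, additive and multiplicative conjunction coincide: A & B and A ⊗ B are provably equivalent. -/
/-- Formulas of first-order intuitionistic linear logic (de Bruijn indices,
terms are variables only). -/
inductive Fml : Type
  | atom : ℕ → List ℕ → Fml
  | one : Fml
  | zero : Fml
  | top : Fml
  | tens : Fml → Fml → Fml
  | amp : Fml → Fml → Fml
  | oplus : Fml → Fml → Fml
  | limp : Fml → Fml → Fml
  | bang : Fml → Fml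
  | all : Fml → Fml
  | ex : Fml → Fml

namespace Fml

/-- Lift a renaming under a binder. -/
def liftF (f : ℕ → ℕ) : ℕ → ℕ
  | 0 => 0
  | n + 1 => f n + 1

/-- Apply a renaming of variables to a formula. -/
def rename (f : ℕ → ℕ) : Fml → Fml
  | atom p l => atom p (l.map f)
  | one => one
  | zero => zero
  | top => top
  | tens A B => tens (A.rename f) (B.rename f)
  | amp A B => amp (A.rename f) (B.rename f)
  | oplus A B => oplus (A.rename f) (B.rename f)
  | limp A B => limp (A.rename f) (B.rename f)
  | bang A => bang (A.rename f)
  | all A => all (A.rename (liftF f))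
  | ex A => ex (A.rename (liftF f))

/-- Shift all free variables up by one. -/
def shift (A : Fml) : Fml := A.rename Nat.succ

/-- Substitute variable `t` for de Bruijn index 0. -/
def substV (t : ℕ) (A : Fml) : Fml :=
  A.rename (fun n => match n with | 0 => t | Nat.succ m => m)

/-- Linear negation `¬A := A ⊸ 0`. -/
def neg (A : Fml) : Fml := limp A zero

/-- `?A := ¬!¬A`. -/
def quest (A : Fml) : Fml := neg (bang (neg A))

end Fml

open Fml

/-- Sequent calculus for intuitionistic linear logic, extended by an
axiom schema `ax` (axioms of the form A ⊢ B). -/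
inductive Deriv (ax : Fml → Fml → Prop) : List Fml → Fml → Prop
  | id (A) : Deriv ax [A] A
  | ofAx {A B : Fml} : ax A B → Deriv ax [A] B
  | exch {Γ Δ : List Fml} {A : Fml} : Γ.Perm Δ → Deriv ax Γ A → Deriv ax Δ A
  | cut {Γ Δ : List Fml} {A C : Fml} : Deriv ax Γ A → Deriv ax (A :: Δ) C → Deriv ax (Γ ++ Δ) C
  | oneL {Γ : List Fml} {C : Fml} : Deriv ax Γ C → Deriv ax (one :: Γ) C
  | oneR : Deriv ax [] one
  | topR {Γ : List Fml} : Deriv ax Γ top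
  | zeroL {Γ : List Fml} {C : Fml} : Deriv ax (zero :: Γ) C
  | tensR {Γ Δ : List Fml} {A B : Fml} : Deriv ax Γ A → Deriv ax Δ B → Deriv ax (Γ ++ Δ) (tens A B)
  | tensL {Γ : List Fml} {A B C : Fml} : Deriv ax (A :: B :: Γ) C → Deriv ax (tens A B :: Γ) C
  | limpR {Γ : List Fml} {A B : Fml} : Deriv ax (A :: Γ) B → Deriv ax Γ (limp A B)
  | limpL {Γ Δ : List Fml} {A B C : Fml} : Deriv ax Γ A → Deriv ax (B :: Δ) C →
      Deriv ax (limp A B :: (Γ ++ Δ)) C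
  | ampR {Γ : List Fml} {A B : Fml} : Deriv ax Γ A → Deriv ax Γ B → Deriv ax Γ (amp A B)
  | ampL₁ {Γ : List Fml} {A B C : Fml} : Deriv ax (A :: Γ) C → Deriv ax (amp A B :: Γ) C
  | ampL₂ {Γ : List Fml} {A B C : Fml} : Deriv ax (B :: Γ) C → Deriv ax (amp A B :: Γ) C
  | oplusR₁ {Γ : List Fml} {A B : Fml} : Deriv ax Γ A → Deriv ax Γ (oplus A B)
  | oplusR₂ {Γ : List Fml} {A B : Fml} : Deriv ax Γ B → Deriv ax Γ (oplus A B)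
  | oplusL {Γ : List Fml} {A B C : Fml} : Deriv ax (A :: Γ) C → Deriv ax (B :: Γ) C →
      Deriv ax (oplus A B :: Γ) C
  | allR {Γ : List Fml} {A : Fml} : Deriv ax (Γ.map shift) A → Deriv ax Γ (all A)
  | allL {Γ : List Fml} {A C : Fml} (t : ℕ) : Deriv ax (substV t A :: Γ) C → Deriv ax (all A :: Γ) C
  | exR {Γ : List Fml} {A : Fml} (t : ℕ) : Deriv ax Γ (substV t A) → Deriv ax Γ (ex A)
  | exL {Γ : List Fml} {A C : Fml} : Deriv ax (A :: Γ.map shift) (shift C) → Deriv ax (ex A :: Γ) C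
  | con {Γ : List Fml} {A C : Fml} : Deriv ax (bang A :: bang A :: Γ) C → Deriv ax (bang A :: Γ) C
  | wkn {Γ : List Fml} {A C : Fml} : Deriv ax Γ C → Deriv ax (bang A :: Γ) C
  | bangR {Γ : List Fml} {A : Fml} : Deriv ax (Γ.map bang) A → Deriv ax (Γ.map bang) (bang A)
  | bangL {Γ : List Fml} {A C : Fml} : Deriv ax (A :: Γ) C → Deriv ax (bang A :: Γ) C

/-- No extra axioms: plain ILL. -/
def NoAx : Fml → Fml → Prop := fun _ _ => False

/-- The promotion axiom schema `A ⊢ !A`. -/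
def PRO : Fml → Fml → Prop := fun A B => B = Fml.bang A

/-- The double-negation elimination schema `¬¬A ⊢ A`. -/
def DNE : Fml → Fml → Prop := fun A B => A = Fml.neg (Fml.neg B)

/-- Provable equivalence: both `A ⊢ B` and `B ⊢ A`. -/
def EquivD (ax : Fml → Fml → Prop) (A B : Fml) : Prop :=
  Deriv ax [A] B ∧ Deriv ax [B] A

theorem stmt1 (A B : Fml) : EquivD PRO (Fml.amp A B) (Fml.tens A B) := by
  constructor
  · -- A & B ⊢ A ⊗ B
    have h1 : Deriv PRO [Fml.amp A B] (Fml.bang (Fml.amp A B)) := Deriv.ofAx rfl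
    have h2 : Deriv PRO [Fml.bang (Fml.amp A B)] (Fml.tens A B) := by
      apply Deriv.con
      apply Deriv.bangL
      apply Deriv.exch (List.Perm.swap _ _ _)
      apply Deriv.bangL
      apply Deriv.ampL₂
      apply Deriv.exch (List.Perm.swap _ _ _)
      apply Deriv.ampL₁
      exact Deriv.tensR (Deriv.id A) (Deriv.id B)
    exact Deriv.cut h1 h2
  · -- A ⊗ B ⊢ A & B
    apply Deriv.tensL
    apply Deriv.ampR
    · apply Deriv.exch (List.Perm.swap A B [])
      exact Deriv.cut (Deriv.ofAx (ax := PRO) (A := B) (B := Fml.bang B) rfl) (Deriv.wkn (Deriv.id A))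
    · exact Deriv.cut (Deriv.ofAx (ax := PRO) (A := A) (B := Fml.bang A) rfl) (Deriv.wkn (Deriv.id B))
end

section
/- In intuitionistic linear logic extended with the promotion axiom A ⊢ !A, the constants ⊤ and 1 are provably equivalent. -/
open Fml

theorem stmt2 : EquivD PRO Fml.top Fml.one := by
  constructor
  · have h1 : Deriv PRO [Fml.top] (Fml.bang Fml.top) := Deriv.ofAx rfl
    have h2 : Deriv PRO [Fml.bang Fml.top] Fml.one := Deriv.wkn Deriv.oneR
    exact Deriv.cut h1 h2
  · exact Deriv.topR
end

section
/- In intuitionistic linear logic, ¬¬(¬¬A ⊗ ¬¬B) is provably equivalent to ¬¬(A ⊗ B). -/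
open Fml

/-! Double negation is a strong monad for `⊗`: the unit is `A ⊢ ¬¬A`, the strength
`¬¬A, ¬¬B ⊢ ¬¬(A ⊗ B)` comes from discarding double negations of hypotheses when the goal
is `0`, and binding `X ⊢ ¬¬Y` to `¬¬X ⊢ ¬¬Y` uses `¬¬¬Y ⊢ ¬Y`. -/

namespace Deriv

variable {ax : Fml → Fml → Prop}

lemma negL {Γ : List Fml} {A C : Fml} (h : Deriv ax Γ A) : Deriv ax (neg A :: Γ) C := by
  simpa [neg] using limpL (Δ := []) (C := C) h zeroL

lemma neg_neg_intro (A : Fml) : Deriv ax [A] (neg (neg A)) :=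
  limpR (negL (id A))

lemma neg_contra {X Y : Fml} (h : Deriv ax [X] Y) : Deriv ax [neg Y] (neg X) :=
  limpR (exch (List.Perm.swap X (neg Y) []) (negL h))

lemma neg_neg_neg (X : Fml) : Deriv ax [neg (neg (neg X))] (neg X) :=
  neg_contra (neg_neg_intro X)

lemma negNeg_bind {X Y : Fml} (h : Deriv ax [X] (neg (neg Y))) :
    Deriv ax [neg (neg X)] (neg (neg Y)) :=
  cut (Δ := []) (neg_contra (neg_contra h)) (neg_neg_neg (neg Y))

lemma negNegL_zero {Γ : List Fml} {A : Fml} (h : Deriv ax (A :: Γ) zero) :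
    Deriv ax (neg (neg A) :: Γ) zero :=
  negL (limpR h)

lemma negNeg_tens (A B : Fml) : Deriv ax [neg (neg A), neg (neg B)] (neg (neg (tens A B))) := by
  have hAB : Deriv ax [neg (tens A B), A, B] zero := negL (tensR (id A) (id B))
  have hA : Deriv ax [neg (neg A), B, neg (tens A B)] zero :=
    negNegL_zero (exch (List.perm_append_comm (l₁ := [_]) (l₂ := [A, B])) hAB)
  have hB : Deriv ax [neg (neg B), neg (neg A), neg (tens A B)] zero :=
    negNegL_zero (exch (List.Perm.swap _ _ _) hA)
  exact limpR (exch (List.reverse_perm _) hB)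

end Deriv

theorem stmt3 (A B : Fml) :
    EquivD NoAx (Fml.neg (Fml.neg (Fml.tens (Fml.neg (Fml.neg A)) (Fml.neg (Fml.neg B)))))
      (Fml.neg (Fml.neg (Fml.tens A B))) :=
  ⟨Deriv.negNeg_bind (Deriv.tensL (Deriv.negNeg_tens A B)),
    Deriv.neg_contra (Deriv.neg_contra
      (Deriv.tensL (Deriv.tensR (Deriv.neg_neg_intro A) (Deriv.neg_neg_intro B))))⟩
end

section
/- In intuitionistic linear logic, ¬¬(¬¬A ⊸ ¬¬B) is provably equivalent to ¬¬(A ⊸ ¬¬B). -/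
open Fml

lemma negMono {ax : Fml → Fml → Prop} {X Y : Fml} (h : Deriv ax [X] Y) :
    Deriv ax [Fml.neg Y] (Fml.neg X) := by
  apply Deriv.limpR
  exact Deriv.exch (List.Perm.swap X (Fml.neg Y) [])
    (Deriv.limpL (Δ := []) h Deriv.zeroL)

lemma dnIntro {ax : Fml → Fml → Prop} (A : Fml) :
    Deriv ax [A] (Fml.neg (Fml.neg A)) := by
  apply Deriv.limpR
  exact Deriv.limpL (Δ := []) (Deriv.id A) Deriv.zeroL

lemma L1 {ax : Fml → Fml → Prop} (A B : Fml) :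
    Deriv ax [Fml.limp (Fml.neg (Fml.neg A)) (Fml.neg (Fml.neg B))]
      (Fml.limp A (Fml.neg (Fml.neg B))) := by
  apply Deriv.limpR
  exact Deriv.exch (List.Perm.swap A _ [])
    (Deriv.limpL (Δ := []) (dnIntro A) (Deriv.id _))

lemma L2 {ax : Fml → Fml → Prop} (A B : Fml) :
    Deriv ax [Fml.limp A (Fml.neg (Fml.neg B))]
      (Fml.limp (Fml.neg (Fml.neg A)) (Fml.neg (Fml.neg B))) := by
  apply Deriv.limpR
  apply Deriv.limpR
  -- goal: [¬B, ¬¬A, A ⊸ ¬¬B] ⊢ 0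
  have inner : Deriv ax [Fml.limp A (Fml.neg (Fml.neg B)), Fml.neg B] (Fml.neg A) := by
    apply Deriv.limpR
    refine Deriv.exch (List.Perm.swap A _ [Fml.neg B]) ?_
    refine Deriv.limpL (Γ := [A]) (Δ := [Fml.neg B]) (Deriv.id A) ?_
    -- [¬¬B, ¬B] ⊢ 0
    exact Deriv.limpL (Γ := [Fml.neg B]) (Δ := []) (Deriv.id _) Deriv.zeroL
  have main : Deriv ax [Fml.neg (Fml.neg A), Fml.limp A (Fml.neg (Fml.neg B)), Fml.neg B]
      Fml.zero :=
    Deriv.limpL (Δ := []) inner Deriv.zeroL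
  refine Deriv.exch ?_ main
  exact (((List.Perm.swap (Fml.neg B) (Fml.limp A (Fml.neg (Fml.neg B))) []).cons _).trans
    (List.Perm.swap (Fml.neg B) (Fml.neg (Fml.neg A)) [Fml.limp A (Fml.neg (Fml.neg B))]))

theorem stmt5 (A B : Fml) :
    EquivD NoAx (Fml.neg (Fml.neg (Fml.limp (Fml.neg (Fml.neg A)) (Fml.neg (Fml.neg B)))))
      (Fml.neg (Fml.neg (Fml.limp A (Fml.neg (Fml.neg B))))) := by
  constructor
  · exact negMono (negMono (L1 A B))
  · exact negMono (negMono (L2 A B))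
end
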